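/- Let e = [0,1] and k ≥ 3. The derivative d/dt maps (λ0λ1)^2 P_{k−3}(e) bijectively onto the L²-orthogonal complement of constants in (λ0λ1) P_{k−2}(e); that is, 0 → (λ0λ1)^2 P_{k−3}(e) → (λ0λ1) P_{k−2}(e)/P_0(e) → 0 is exact. -/

import Mathlib

/-!
Writing `b = X * (1 - X)`, the derivative of `b ^ 2 * u` is `b * (2 * b' * u + b * u')`, and
being a derivative it integrates to zero over `[0, 1]`. Conversely, if `b * p` has mean zero, its
antiderivative `G` vanishing at `0` also vanishes at `1`, and so does `G' = b * p`; hence `0` and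
`1` are double roots of `G`, i.e. `G = b ^ 2 * u`. Degrees match because `b` has degree `2` and
differentiation lowers the degree by one; uniqueness holds because `b ^ 2 * u` is never a nonzero
constant.
-/

open Polynomial

namespace Polynomial

lemma exists_derivative_eq_and_eval_zero {K : Type*} [Field K] [CharZero K] (q : K[X]) :
    ∃ G : K[X], derivative G = q ∧ G.eval 0 = 0 := by
  induction q using Polynomial.induction_on' with
  | add p q hp hq =>
    obtain ⟨P, hP, hP0⟩ := hp
    obtain ⟨Q, hQ, hQ0⟩ := hq
    exact ⟨P + Q, by rw [derivative_add, hP, hQ], by rw [eval_add, hP0, hQ0, add_zero]⟩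
  | monomial n a =>
    refine ⟨C (a / (n + 1)) * X ^ (n + 1), ?_, by simp⟩
    have hn : ((n : K) + 1) ≠ 0 := by exact_mod_cast n.succ_ne_zero
    rw [derivative_C_mul, derivative_X_pow, Nat.cast_add_one, ← mul_assoc, ← C_mul,
      div_mul_cancel₀ _ hn, add_tsub_cancel_right, C_mul_X_pow_eq_monomial]

lemma integral_eval_derivative (q : ℝ[X]) (a b : ℝ) :
    ∫ t in a..b, (derivative q).eval t = q.eval b - q.eval a :=
  intervalIntegral.integral_eq_sub_of_hasDerivAt (fun x _ => q.hasDerivAt x)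
    ((Polynomial.continuous _).intervalIntegrable _ _)

section CommRing

variable {R : Type*} [CommRing R]

lemma dvd_derivative_sq_mul (b u : R[X]) : b ∣ derivative (b ^ 2 * u) :=
  ⟨C 2 * derivative b * u + b * derivative u, by
    rw [derivative_mul, derivative_sq]
    ring⟩

lemma sq_dvd_of_isRoot_of_isRoot_derivative {G : R[X]} {a : R} (h : G.IsRoot a)
    (h' : (derivative G).IsRoot a) : (X - C a) ^ 2 ∣ G := by
  rcases eq_or_ne G 0 with rfl | hG
  · exact dvd_zero _
  · exact (le_rootMultiplicity_iff hG).1 ((one_lt_rootMultiplicity_iff_isRoot hG).2 ⟨h, h'⟩)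

lemma X_mul_one_sub_X_sq_dvd {G : R[X]} (h0 : G.IsRoot 0) (h1 : G.IsRoot 1)
    (hG' : X * (1 - X) ∣ derivative G) : (X * (1 - X)) ^ 2 ∣ G := by
  have hroot (a : R) (ha : (X * (1 - X) : R[X]).IsRoot a) : (derivative G).IsRoot a :=
    dvd_iff_isRoot.1 ((dvd_iff_isRoot.2 ha).trans hG')
  have hcop : IsCoprime ((X - C (0 : R)) ^ 2) ((X - C 1) ^ 2) :=
    IsCoprime.pow ⟨1, -1, by simp⟩
  have hfactor : (X * (1 - X) : R[X]) ^ 2 = (X - C 0) ^ 2 * (X - C 1) ^ 2 := by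
    simp only [map_zero, map_one, sub_zero]
    ring
  rw [hfactor]
  exact hcop.mul_dvd (sq_dvd_of_isRoot_of_isRoot_derivative h0 (hroot 0 (by simp)))
    (sq_dvd_of_isRoot_of_isRoot_derivative h1 (hroot 1 (by simp)))

lemma natDegree_X_mul_one_sub_X [Nontrivial R] : (X * (1 - X) : R[X]).natDegree = 2 := by
  rw [show (X * (1 - X) : R[X]) = -X ^ 2 + X by ring]
  compute_degree!

lemma X_mul_one_sub_X_ne_zero [Nontrivial R] : (X * (1 - X) : R[X]) ≠ 0 :=
  ne_zero_of_natDegree_gt (n := 0) ((natDegree_X_mul_one_sub_X (R := R)).symm ▸ two_pos)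

variable [IsDomain R] [IsAddTorsionFree R]

lemma natDegree_eq_of_derivative_X_mul_one_sub_X_sq_mul_eq {u p : R[X]} (hu : u ≠ 0)
    (h : derivative ((X * (1 - X)) ^ 2 * u) = X * (1 - X) * p) :
    p.natDegree = u.natDegree + 1 := by
  have hdeg : (derivative ((X * (1 - X)) ^ 2 * u)).natDegree = u.natDegree + 3 := by
    rw [natDegree_derivative, natDegree_mul (pow_ne_zero 2 X_mul_one_sub_X_ne_zero) hu,
      natDegree_pow, natDegree_X_mul_one_sub_X]
    omega
  have hp : p ≠ 0 := by
    rintro rfl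
    rw [h, mul_zero, natDegree_zero] at hdeg
    omega
  rw [h, natDegree_mul X_mul_one_sub_X_ne_zero hp, natDegree_X_mul_one_sub_X] at hdeg
  omega

lemma derivative_X_mul_one_sub_X_sq_mul_injective :
    Function.Injective fun u : R[X] => derivative ((X * (1 - X)) ^ 2 * u) := by
  intro u v huv
  by_contra hne
  have h : derivative ((X * (1 - X)) ^ 2 * (u - v)) = X * (1 - X) * 0 := by
    rw [mul_sub, derivative_sub, sub_eq_zero.2 huv, mul_zero]
  have := natDegree_eq_of_derivative_X_mul_one_sub_X_sq_mul_eq (sub_ne_zero.2 hne) h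
  rw [natDegree_zero] at this
  omega

end CommRing

end Polynomial

/-- Exactness of the edge bubble complex
`0 → (λ0λ1)^2 P_{k-3}(e) → (λ0λ1) P_{k-2}(e)/P_0(e) → 0` under `d/dt`,
on the edge `e = [0,1]` with `λ0 = 1 - t`, `λ1 = t`. -/
theorem stmt_3 (k : ℕ) (hk : 3 ≤ k) :
    (∀ u1 : Polynomial ℝ, u1.natDegree ≤ k - 3 →
      (∃ p : Polynomial ℝ, p.natDegree ≤ k - 2 ∧
        derivative ((X * (1 - X)) ^ 2 * u1) = (X * (1 - X)) * p) ∧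
      (∫ t in (0:ℝ)..1, (derivative ((X * (1 - X)) ^ 2 * u1)).eval t = 0)) ∧
    (∀ p : Polynomial ℝ, p.natDegree ≤ k - 2 →
      (∫ t in (0:ℝ)..1, ((X * (1 - X)) * p).eval t = 0) →
      ∃! u1 : Polynomial ℝ, u1.natDegree ≤ k - 3 ∧
        derivative ((X * (1 - X)) ^ 2 * u1) = (X * (1 - X)) * p) := by
  refine ⟨fun u hu => ⟨?_, by rw [integral_eval_derivative]; simp⟩, fun p hp hint => ?_⟩
  · obtain ⟨p, hup⟩ := dvd_derivative_sq_mul (X * (1 - X)) u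
    refine ⟨p, ?_, hup⟩
    rcases eq_or_ne u 0 with rfl | hu0
    · rw [mul_zero, derivative_zero, eq_comm, mul_eq_zero,
        or_iff_right X_mul_one_sub_X_ne_zero] at hup
      simp [hup]
    · have := natDegree_eq_of_derivative_X_mul_one_sub_X_sq_mul_eq hu0 hup
      omega
  · obtain ⟨G, hG, hG0⟩ := exists_derivative_eq_and_eval_zero (X * (1 - X) * p)
    have hG1 : G.eval 1 = 0 := by
      rw [← hG, integral_eval_derivative, hG0, sub_zero] at hint
      exact hint
    obtain ⟨u, rfl⟩ := X_mul_one_sub_X_sq_dvd hG0 hG1 (hG ▸ dvd_mul_right _ _)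
    refine ⟨u, ⟨?_, hG⟩, fun v hv => derivative_X_mul_one_sub_X_sq_mul_injective
      (hv.2.trans hG.symm)⟩
    rcases eq_or_ne u 0 with rfl | hu0
    · simp
    · have := natDegree_eq_of_derivative_X_mul_one_sub_X_sq_mul_eq hu0 hG
      omega
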